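/- There exist binary random variables X, Y such that s*(X;Y) ≠ s*(Y;X); specifically, with P(X=0) = 0.85, P(Y=0) = 0.39, P(X=0,Y=0) = 0.36, one has s*(X;Y) > s*(Y;X). -/

import Mathlib

open scoped BigOperators

noncomputable section

/-- `p` is a probability mass function on a finite type. -/
def IsPMF {X : Type*} [Fintype X] (p : X → ℝ) : Prop :=
  (∀ x, 0 ≤ p x) ∧ ∑ x, p x = 1

/-- `p` is a joint probability mass function. -/
def IsJointPMF {X Y : Type*} [Fintype X] [Fintype Y] (p : X → Y → ℝ) : Prop :=
  (∀ x y, 0 ≤ p x y) ∧ ∑ x, ∑ y, p x y = 1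

/-- Hirschfeld–Gebelein–Rényi maximal correlation of a joint pmf `p`. -/
def maxCorr {X Y : Type*} [Fintype X] [Fintype Y] (p : X → Y → ℝ) : ℝ :=
  sSup {c : ℝ | ∃ f : X → ℝ, ∃ g : Y → ℝ,
    (∑ x, ∑ y, p x y * f x) = 0 ∧ (∑ x, ∑ y, p x y * g y) = 0 ∧
    (∑ x, ∑ y, p x y * (f x)^2) = 1 ∧ (∑ x, ∑ y, p x y * (g y)^2) = 1 ∧
    c = ∑ x, ∑ y, p x y * f x * g y}

/-- Relative entropy (KL divergence) between pmfs on a finite type. -/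
def KL {X : Type*} [Fintype X] (r p : X → ℝ) : ℝ :=
  ∑ x, r x * Real.log (r x / p x)

/-- `s*(X;Y)` for input distribution `p` and channel `W`. -/
def sStar {X Y : Type*} [Fintype X] [Fintype Y] (p : X → ℝ) (W : X → Y → ℝ) : ℝ :=
  sSup {c : ℝ | ∃ r : X → ℝ, IsPMF r ∧ r ≠ p ∧
    c = KL (fun y => ∑ x, r x * W x y) (fun y => ∑ x, p x * W x y) / KL r p}

/-- Shannon entropy of a pmf on a finite type. -/
def entropy {X : Type*} [Fintype X] (p : X → ℝ) : ℝ :=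
  ∑ x, Real.negMulLog (p x)

/-- Mutual information of a joint pmf. -/
def mutInfo {X Y : Type*} [Fintype X] [Fintype Y] (p : X → Y → ℝ) : ℝ :=
  entropy (fun x => ∑ y, p x y) + entropy (fun y => ∑ x, p x y)
    - entropy (fun z : X × Y => p z.1 z.2)

end

/-- The joint pmf of Remark: `P(X=0,Y=0)=0.36`, `P(X=0,Y=1)=0.49`, `P(X=1,Y=0)=0.03`,
`P(X=1,Y=1)=0.12`, so `P(X=0)=0.85` and `P(Y=0)=0.39`. -/
def P19 : Fin 2 → Fin 2 → ℝ := ![![0.36, 0.49], ![0.03, 0.12]]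

/-!
All marginals are Bernoulli laws and both channels are binary, so every ratio in `s*` has the
form `D(w q ‖ w a) / D(q ‖ a)` for binary divergences, with `w q = q s + (1 - q) t` the output
law. As `q ↦ D(q ‖ a)` has second derivative `1 / (q (1 - q))`, the function
`c D(q ‖ a) - D(w q ‖ w a)` is convex on `[0, 1]` whenever
`(s - t)² q (1 - q) ≤ c · w q (1 - w q)`; it vanishes together with its derivative at `q = a`,
hence is nonnegative. For the channel `Y → X` this quadratic inequality holds with `c = 19/500`,
so `s*(Y;X) ≤ 19/500`, while the input `(1/10, 9/10)` of the channel `X → Y` already has ratio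
`≈ 0.0457`. With `c = 1` the inequality is the law of total variance, which bounds the set in
the supremum defining `s*(X;Y)`.
-/

open Real Set InformationTheory

section KL

variable {X : Type*} [Fintype X]

lemma KL_self (p : X → ℝ) : KL p p = 0 := by
  simp [KL]

lemma KL_eq_sum_klFun {r p : X → ℝ} (hp : ∀ x, p x ≠ 0) (hsum : ∑ x, r x = ∑ x, p x) :
    KL r p = ∑ x, p x * klFun (r x / p x) := by
  have hterm : ∀ x, p x * klFun (r x / p x) = r x * log (r x / p x) + (p x - r x) := by
    intro x
    rw [klFun_apply]
    field_simp [hp x]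
    ring
  simp only [hterm, Finset.sum_add_distrib, Finset.sum_sub_distrib, hsum, sub_self, add_zero, KL]

lemma KL_pos {r p : X → ℝ} (hr : ∀ x, 0 ≤ r x) (hp : ∀ x, 0 < p x)
    (hsum : ∑ x, r x = ∑ x, p x) (hne : r ≠ p) : 0 < KL r p := by
  rw [KL_eq_sum_klFun (fun x => (hp x).ne') hsum]
  obtain ⟨x, hx⟩ := Function.ne_iff.mp hne
  have hnonneg : ∀ x, 0 ≤ p x * klFun (r x / p x) := fun x =>
    mul_nonneg (hp x).le (klFun_nonneg (div_nonneg (hr x) (hp x).le))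
  refine Finset.sum_pos' (fun x _ => hnonneg x) ⟨x, Finset.mem_univ x, ?_⟩
  refine lt_of_le_of_ne (hnonneg x) (Ne.symm (mul_ne_zero (hp x).ne' ?_))
  rw [Ne, klFun_eq_zero_iff (div_nonneg (hr x) (hp x).le), div_eq_one_iff_eq (hp x).ne']
  exact hx

end KL

section SStar

variable {X Y : Type*} [Fintype X] [Fintype Y] {p : X → ℝ} {W : X → Y → ℝ} {C : ℝ}

lemma KL_ratio_le_of_KL_le (hp : IsPMF p) (hp0 : ∀ x, 0 < p x)
    (hC : ∀ r, IsPMF r →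
      KL (fun y => ∑ x, r x * W x y) (fun y => ∑ x, p x * W x y) ≤ C * KL r p)
    {r : X → ℝ} (hr : IsPMF r) (hne : r ≠ p) :
    KL (fun y => ∑ x, r x * W x y) (fun y => ∑ x, p x * W x y) / KL r p ≤ C :=
  (div_le_iff₀ (KL_pos hr.1 hp0 (hr.2.trans hp.2.symm) hne)).mpr (hC r hr)

lemma sStar_le_of_KL_le (hp : IsPMF p) (hp0 : ∀ x, 0 < p x) (hC0 : 0 ≤ C)
    (hC : ∀ r, IsPMF r →
      KL (fun y => ∑ x, r x * W x y) (fun y => ∑ x, p x * W x y) ≤ C * KL r p) :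
    sStar p W ≤ C :=
  Real.sSup_le (by rintro _ ⟨r, hr, hne, rfl⟩; exact KL_ratio_le_of_KL_le hp hp0 hC hr hne) hC0

lemma le_sStar_of_KL_le (hp : IsPMF p) (hp0 : ∀ x, 0 < p x)
    (hC : ∀ r, IsPMF r →
      KL (fun y => ∑ x, r x * W x y) (fun y => ∑ x, p x * W x y) ≤ C * KL r p)
    {r : X → ℝ} (hr : IsPMF r) (hne : r ≠ p) :
    KL (fun y => ∑ x, r x * W x y) (fun y => ∑ x, p x * W x y) / KL r p ≤ sStar p W :=
  le_csSup ⟨C, by rintro _ ⟨r, hr, hne, rfl⟩; exact KL_ratio_le_of_KL_le hp hp0 hC hr hne⟩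
    ⟨r, hr, hne, rfl⟩

end SStar

section Binary

def binaryPMF (q : ℝ) : Fin 2 → ℝ := ![q, 1 - q]

lemma isPMF_binaryPMF {q : ℝ} (hq : q ∈ Icc 0 1) : IsPMF (binaryPMF q) :=
  ⟨fun x => by fin_cases x <;> simp [binaryPMF, hq.1, hq.2],
    by simp [binaryPMF, Fin.sum_univ_two]⟩

lemma binaryPMF_injective : Function.Injective binaryPMF := fun _ _ h => congrFun h 0

lemma binaryPMF_pos {q : ℝ} (hq : q ∈ Ioo 0 1) (x : Fin 2) : 0 < binaryPMF q x := by
  fin_cases x <;> simp [binaryPMF, hq.1, hq.2]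

lemma IsPMF.eq_binaryPMF {r : Fin 2 → ℝ} (hr : IsPMF r) : r = binaryPMF (r 0) := by
  have hsum : r 0 + r 1 = 1 := by simpa [Fin.sum_univ_two] using hr.2
  funext x
  fin_cases x <;> simp [binaryPMF]
  linarith

lemma IsPMF.apply_zero_mem_Icc {r : Fin 2 → ℝ} (hr : IsPMF r) : r 0 ∈ Icc 0 1 := by
  have hsum : r 0 + r 1 = 1 := by simpa [Fin.sum_univ_two] using hr.2
  exact ⟨hr.1 0, by linarith [hr.1 1]⟩

lemma channel_binaryPMF (q s t : ℝ) :
    (fun y => ∑ x, binaryPMF q x * ![binaryPMF s, binaryPMF t] x y)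
      = binaryPMF (q * s + (1 - q) * t) := by
  funext y
  fin_cases y
  · simp [binaryPMF, Fin.sum_univ_two]
  · simp [binaryPMF, Fin.sum_univ_two]
    ring

lemma KL_binaryPMF {a : ℝ} (ha : a ∈ Ioo 0 1) (q : ℝ) :
    KL (binaryPMF q) (binaryPMF a) = a * klFun (q / a) + (1 - a) * klFun ((1 - q) / (1 - a)) := by
  rw [KL_eq_sum_klFun (fun x => (binaryPMF_pos ha x).ne') (by simp [binaryPMF, Fin.sum_univ_two])]
  simp [binaryPMF, Fin.sum_univ_two]

lemma continuous_KL_binaryPMF {a : ℝ} (ha : a ∈ Ioo 0 1) :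
    Continuous fun q => KL (binaryPMF q) (binaryPMF a) := by
  simp only [KL_binaryPMF ha]
  fun_prop

lemma hasDerivAt_KL_binaryPMF {a q : ℝ} (ha : a ∈ Ioo 0 1) (hq : q ∈ Ioo 0 1) :
    HasDerivAt (fun q => KL (binaryPMF q) (binaryPMF a))
      (log (q / a) - log ((1 - q) / (1 - a))) q := by
  have ha1 : 1 - a ≠ 0 := (sub_pos.mpr ha.2).ne'
  have h0 := ((hasDerivAt_klFun (div_pos hq.1 ha.1).ne').comp q
      ((hasDerivAt_id' q).div_const a)).const_mul a
  have h1 := ((hasDerivAt_klFun (div_pos (sub_pos.mpr hq.2) (sub_pos.mpr ha.2)).ne').comp q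
      (((hasDerivAt_id' q).const_sub 1).div_const (1 - a))).const_mul (1 - a)
  simp only [KL_binaryPMF ha]
  refine (h0.add h1).congr_deriv ?_
  field_simp [ha.1.ne', ha1]
  ring

lemma hasDerivAt_log_div_sub_log_div {a q : ℝ} (ha : a ∈ Ioo 0 1) (hq : q ∈ Ioo 0 1) :
    HasDerivAt (fun q => log (q / a) - log ((1 - q) / (1 - a))) (1 / (q * (1 - q))) q := by
  have hq1 : 0 < 1 - q := sub_pos.mpr hq.2
  have ha1 : 0 < 1 - a := sub_pos.mpr ha.2
  have h0 := ((hasDerivAt_id' q).div_const a).log (div_pos hq.1 ha.1).ne'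
  have h1 := (((hasDerivAt_id' q).const_sub 1).div_const (1 - a)).log (div_pos hq1 ha1).ne'
  refine (h0.sub h1).congr_deriv ?_
  field_simp [ha.1.ne', hq.1.ne', hq1.ne', ha1.ne']
  ring

end Binary

lemma ConvexOn.isMinOn_of_hasDerivAt_eq_zero {S : Set ℝ} {f : ℝ → ℝ} {a : ℝ}
    (hf : ConvexOn ℝ S f) (ha : a ∈ interior S) (hd : HasDerivAt f 0 a) : IsMinOn f S a :=
  hf.isMinOn_of_rightDeriv_eq_zero ha (hd.hasDerivWithinAt.derivWithin (uniqueDiffWithinAt_Ioi a))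

section Contraction

variable {a s t c : ℝ}

lemma mix_mem_Ioo (hs : s ∈ Ioo 0 1) (ht : t ∈ Ioo 0 1) {q : ℝ} (hq : q ∈ Icc 0 1) :
    q * s + (1 - q) * t ∈ Ioo 0 1 := by
  simpa only [smul_eq_mul] using convex_Ioo (0 : ℝ) 1 hs ht hq.1 (sub_nonneg.mpr hq.2) (by ring)

lemma hasDerivAt_mix (s t q : ℝ) : HasDerivAt (fun q => q * s + (1 - q) * t) (s - t) q := by
  have := ((hasDerivAt_id' q).mul_const s).add (((hasDerivAt_id' q).const_sub 1).mul_const t)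
  exact this.congr_deriv (by ring)

lemma KL_binaryPMF_mix_le (ha : a ∈ Ioo 0 1) (hs : s ∈ Ioo 0 1) (ht : t ∈ Ioo 0 1)
    (hc : ∀ q ∈ Ioo (0 : ℝ) 1, (s - t) ^ 2 * (q * (1 - q))
      ≤ c * ((q * s + (1 - q) * t) * (1 - (q * s + (1 - q) * t))))
    {q : ℝ} (hq : q ∈ Icc 0 1) :
    KL (binaryPMF (q * s + (1 - q) * t)) (binaryPMF (a * s + (1 - a) * t))
      ≤ c * KL (binaryPMF q) (binaryPMF a) := by
  set w : ℝ → ℝ := fun q => q * s + (1 - q) * t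
  have hw : ∀ q ∈ Icc (0 : ℝ) 1, w q ∈ Ioo 0 1 := fun q hq => mix_mem_Ioo hs ht hq
  have hwa : w a ∈ Ioo 0 1 := hw a (Ioo_subset_Icc_self ha)
  set h : ℝ → ℝ := fun q =>
    c * KL (binaryPMF q) (binaryPMF a) - KL (binaryPMF (w q)) (binaryPMF (w a))
  set h' : ℝ → ℝ := fun q => c * (log (q / a) - log ((1 - q) / (1 - a)))
      - (log (w q / w a) - log ((1 - w q) / (1 - w a))) * (s - t)
  have hh' : ∀ q ∈ Ioo (0 : ℝ) 1, HasDerivAt h (h' q) q := fun q hq =>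
    ((hasDerivAt_KL_binaryPMF ha hq).const_mul c).sub
      ((hasDerivAt_KL_binaryPMF hwa (hw q (Ioo_subset_Icc_self hq))).comp q (hasDerivAt_mix s t q))
  have hh'' : ∀ q ∈ Ioo (0 : ℝ) 1, HasDerivAt h'
      (c * (1 / (q * (1 - q))) - 1 / (w q * (1 - w q)) * (s - t) * (s - t)) q := fun q hq =>
    ((hasDerivAt_log_div_sub_log_div ha hq).const_mul c).sub
      (((hasDerivAt_log_div_sub_log_div hwa (hw q (Ioo_subset_Icc_self hq))).comp q
        (hasDerivAt_mix s t q)).mul_const (s - t))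
  have hconvex : ConvexOn ℝ (Icc 0 1) h := by
    refine convexOn_of_hasDerivWithinAt2_nonneg (f' := h')
      (f'' := fun q => c * (1 / (q * (1 - q))) - 1 / (w q * (1 - w q)) * (s - t) * (s - t))
      (convex_Icc 0 1) ?_ ?_ ?_ ?_
    · exact (((continuous_KL_binaryPMF ha).const_mul c).sub
        ((continuous_KL_binaryPMF hwa).comp (by fun_prop))).continuousOn
    · rw [interior_Icc]
      exact fun q hq => (hh' q hq).hasDerivWithinAt
    · rw [interior_Icc]
      exact fun q hq => (hh'' q hq).hasDerivWithinAt
    · rw [interior_Icc]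
      intro q hq
      obtain ⟨hw0, hw1⟩ := hw q (Ioo_subset_Icc_self hq)
      rw [sub_nonneg, mul_assoc, ← sq, one_div_mul_eq_div, mul_one_div,
        div_le_div_iff₀ (mul_pos hw0 (sub_pos.mpr hw1)) (mul_pos hq.1 (sub_pos.mpr hq.2))]
      exact hc q hq
  have hmin : IsMinOn h (Icc 0 1) a := by
    refine hconvex.isMinOn_of_hasDerivAt_eq_zero (by rwa [interior_Icc]) ((hh' a ha).congr_deriv ?_)
    simp [h', div_self ha.1.ne', div_self (sub_pos.mpr ha.2).ne', div_self hwa.1.ne',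
      div_self (sub_pos.mpr hwa.2).ne']
  have := isMinOn_iff.mp hmin q hq
  simp only [h, w, KL_self, mul_zero, sub_zero] at this
  linarith

end Contraction

section BinaryChannel

variable {a s t c : ℝ}

lemma KL_binaryChannel_le (ha : a ∈ Ioo 0 1) (hs : s ∈ Ioo 0 1) (ht : t ∈ Ioo 0 1)
    (hc : ∀ q ∈ Ioo (0 : ℝ) 1, (s - t) ^ 2 * (q * (1 - q))
      ≤ c * ((q * s + (1 - q) * t) * (1 - (q * s + (1 - q) * t))))
    {r : Fin 2 → ℝ} (hr : IsPMF r) :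
    KL (fun y => ∑ x, r x * ![binaryPMF s, binaryPMF t] x y)
      (fun y => ∑ x, binaryPMF a x * ![binaryPMF s, binaryPMF t] x y)
      ≤ c * KL r (binaryPMF a) := by
  rw [hr.eq_binaryPMF, channel_binaryPMF, channel_binaryPMF]
  exact KL_binaryPMF_mix_le ha hs ht hc hr.apply_zero_mem_Icc

/-- Law of total variance for a two-component mixture of Bernoulli laws. -/
lemma sq_sub_mul_le_mix_mul_one_sub_mix {q : ℝ} (hs : s ∈ Icc 0 1) (ht : t ∈ Icc 0 1)
    (hq : q ∈ Icc 0 1) :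
    (s - t) ^ 2 * (q * (1 - q)) ≤ (q * s + (1 - q) * t) * (1 - (q * s + (1 - q) * t)) := by
  have hvar : (q * s + (1 - q) * t) * (1 - (q * s + (1 - q) * t))
      = q * (s * (1 - s)) + (1 - q) * (t * (1 - t)) + (s - t) ^ 2 * (q * (1 - q)) := by ring
  have hs' := mul_nonneg hq.1 (mul_nonneg hs.1 (sub_nonneg.mpr hs.2))
  have ht' := mul_nonneg (sub_nonneg.mpr hq.2) (mul_nonneg ht.1 (sub_nonneg.mpr ht.2))
  linarith

lemma sStar_binaryChannel_le (ha : a ∈ Ioo 0 1) (hs : s ∈ Ioo 0 1) (ht : t ∈ Ioo 0 1)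
    (hc0 : 0 ≤ c)
    (hc : ∀ q ∈ Ioo (0 : ℝ) 1, (s - t) ^ 2 * (q * (1 - q))
      ≤ c * ((q * s + (1 - q) * t) * (1 - (q * s + (1 - q) * t)))) :
    sStar (binaryPMF a) ![binaryPMF s, binaryPMF t] ≤ c :=
  sStar_le_of_KL_le (isPMF_binaryPMF (Ioo_subset_Icc_self ha)) (binaryPMF_pos ha) hc0
    fun _ hr => KL_binaryChannel_le ha hs ht hc hr

lemma KL_ratio_le_sStar_binaryChannel (ha : a ∈ Ioo 0 1) (hs : s ∈ Ioo 0 1) (ht : t ∈ Ioo 0 1)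
    {q : ℝ} (hq : q ∈ Icc 0 1) (hqa : q ≠ a) :
    KL (binaryPMF (q * s + (1 - q) * t)) (binaryPMF (a * s + (1 - a) * t))
      / KL (binaryPMF q) (binaryPMF a) ≤ sStar (binaryPMF a) ![binaryPMF s, binaryPMF t] := by
  have hdp : ∀ q ∈ Ioo (0 : ℝ) 1, (s - t) ^ 2 * (q * (1 - q))
      ≤ 1 * ((q * s + (1 - q) * t) * (1 - (q * s + (1 - q) * t))) := fun q hq' => by
    rw [one_mul]
    exact sq_sub_mul_le_mix_mul_one_sub_mix (Ioo_subset_Icc_self hs) (Ioo_subset_Icc_self ht)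
      (Ioo_subset_Icc_self hq')
  have := le_sStar_of_KL_le (isPMF_binaryPMF (Ioo_subset_Icc_self ha)) (binaryPMF_pos ha)
    (fun _ hr => KL_binaryChannel_le ha hs ht hdp hr) (isPMF_binaryPMF hq)
    (binaryPMF_injective.ne hqa)
  rwa [channel_binaryPMF, channel_binaryPMF] at this

end BinaryChannel

/-- After exponentiation, `19 D(1/10 ‖ 17/20) < 500 D(189/850 ‖ 39/100)` compares products of
powers of `2/17, 6, 126/221, 1322/1037`. The exponents `1, 12, 73, 252` used below are `0.65` times
the exact coefficients `1.9, 17.1, 111.18, 388.82`, rounded in the direction allowed by the signs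
of the logarithms. -/
lemma lt_KL_ratio_witness :
    19 / 500 < KL (binaryPMF (189 / 850)) (binaryPMF (39 / 100))
      / KL (binaryPMF (1 / 10)) (binaryPMF (17 / 20)) := by
  have hden : 0 < KL (binaryPMF (1 / 10)) (binaryPMF (17 / 20)) :=
    KL_pos (isPMF_binaryPMF (by norm_num)).1 (binaryPMF_pos (by norm_num))
      (by simp [binaryPMF, Fin.sum_univ_two]) (binaryPMF_injective.ne (by norm_num))
  rw [lt_div_iff₀ hden]
  simp only [KL, binaryPMF, Fin.sum_univ_two]
  norm_num
  have hpow : log (2 / 17 * 6 ^ 12) < log ((126 / 221) ^ 73 * (1322 / 1037) ^ 252) :=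
    log_lt_log (by norm_num) (by norm_num)
  rw [log_mul (by norm_num) (by norm_num), log_mul (by norm_num) (by norm_num), log_pow, log_pow,
    log_pow] at hpow
  have h₁ : log (126 / 221) < 0 := log_neg (by norm_num) (by norm_num)
  have h₂ : 0 < log (1322 / 1037) := log_pos (by norm_num)
  have h₃ : log (2 / 17) < 0 := log_neg (by norm_num) (by norm_num)
  have h₄ : 0 < log 6 := log_pos (by norm_num)
  linarith

/-- `s*` is not symmetric: for this joint distribution
`s*(X;Y) > s*(Y;X)`. -/
theorem sStar_not_symmetric :
    sStar (fun x => ∑ y, P19 x y) (fun x y => P19 x y / (∑ y', P19 x y'))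
      > sStar (fun y => ∑ x, P19 x y) (fun y x => P19 x y / (∑ x', P19 x' y)) := by
  have hX : (fun x => ∑ y, P19 x y) = binaryPMF (17 / 20) := by
    funext x; fin_cases x <;> norm_num [P19, binaryPMF, Fin.sum_univ_two]
  have hY : (fun y => ∑ x, P19 x y) = binaryPMF (39 / 100) := by
    funext y; fin_cases y <;> norm_num [P19, binaryPMF, Fin.sum_univ_two]
  have hWX : (fun x y => P19 x y / ∑ y', P19 x y')
      = ![binaryPMF (36 / 85), binaryPMF (1 / 5)] := by
    funext x y; fin_cases x <;> fin_cases y <;> norm_num [P19, binaryPMF, Fin.sum_univ_two]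
  have hWY : (fun y x => P19 x y / ∑ x', P19 x' y)
      = ![binaryPMF (12 / 13), binaryPMF (49 / 61)] := by
    funext y x; fin_cases y <;> fin_cases x <;> norm_num [P19, binaryPMF, Fin.sum_univ_two]
  rw [hX, hY, hWX, hWY]
  calc sStar (binaryPMF (39 / 100)) ![binaryPMF (12 / 13), binaryPMF (49 / 61)]
      ≤ 19 / 500 := sStar_binaryChannel_le (by norm_num) (by norm_num) (by norm_num) (by norm_num)
        -- a quadratic in `q` with negative discriminant and vertex `2981 / 4810`
        fun q _ => by nlinarith [sq_nonneg (q - 2981 / 4810)]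
    _ < KL (binaryPMF (189 / 850)) (binaryPMF (39 / 100))
          / KL (binaryPMF (1 / 10)) (binaryPMF (17 / 20)) := lt_KL_ratio_witness
    _ ≤ sStar (binaryPMF (17 / 20)) ![binaryPMF (36 / 85), binaryPMF (1 / 5)] := by
        convert KL_ratio_le_sStar_binaryChannel (a := 17 / 20) (s := 36 / 85) (t := 1 / 5)
          (q := 1 / 10) (by norm_num) (by norm_num) (by norm_num) (by norm_num) (by norm_num)
          using 4 <;> norm_num
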